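/- arXiv:2301.13424 — 4 statements merged into one kernel-verified Lean document; each statement's English description precedes it below -/
import Mathlib

section
/- Assume μ satisfies Assumption (A) and that Ω⁻ is nonempty. Let K be a compact subset of Ω⁻. Then there exists a constant c > 0 such that for all sufficiently large n, the probability that K ⊆ Λ_n is at least 1 − e^{−cn}. -/
open MeasureTheory ProbabilityTheory Filter Metric

/-- Logarithmic potential of a measure on ℂ. -/
noncomputable def logPot (μ : Measure ℂ) (z : ℂ) : ℝ :=
  ∫ w, Real.log ‖z - w‖ ∂μ

/-- Topological support of a measure on ℂ. -/
def msupport (μ : Measure ℂ) : Set ℂ :=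
  {x : ℂ | ∀ U ∈ nhds x, 0 < μ U}

/-- Assumption (A): for every compact `K`, `sup_{z ∈ K} ∫ (log|z-w|)² dμ(w) < ∞`. -/
def AssumptionA (μ : Measure ℂ) : Prop :=
  ∀ K : Set ℂ, IsCompact K → ∃ C : ℝ, ∀ z ∈ K,
    ∫⁻ w, ENNReal.ofReal ((Real.log ‖z - w‖) ^ 2) ∂μ ≤ ENNReal.ofReal C

/-- Assumption (D): `μ(B(z,r)) ≤ C rᵉ` for all `z` and `r > 0`. -/
def AssumptionD (μ : Measure ℂ) : Prop :=
  ∃ C : ℝ, ∃ ε : ℝ, 0 < ε ∧ ∀ z : ℂ, ∀ r : ℝ, 0 < r →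
    μ (Metric.ball z r) ≤ ENNReal.ofReal (C * r ^ ε)

/-- The filled unit lemniscate of `p_n(z) = ∏_{k<n} (z - X k ω)`. -/
def lemniscate {Ω : Type*} (X : ℕ → Ω → ℂ) (n : ℕ) (ω : Ω) : Set ℂ :=
  {z : ℂ | ‖∏ k ∈ Finset.range n, (z - X k ω)‖ < 1}

/-- Inradius of a planar set: the sup of radii of open disks contained in it (0 if none). -/
noncomputable def inradius (U : Set ℂ) : ℝ :=
  sSup {r : ℝ | 0 < r ∧ ∃ c : ℂ, Metric.ball c r ⊆ U}

open scoped Topology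

/-!
Fix `z₀ ∈ K`. On the disc `B(z₀, δ)` every factor of `p_n` satisfies `|z - X_k| ≤ |z₀ - X_k| + δ`,
so the disc leaves `Λ_n` only if `∑_k log (|z₀ - X_k| + δ) ≥ 0`. As `δ → 0` the mean
`∫ log (|z₀ - w| + δ) dμ(w)` tends to `U_μ(z₀) < 0` by dominated convergence (Assumption (A) makes
`log |z₀ - ·|` integrable), so it is negative for some `δ > 0`. The compact support makes
`log (|z₀ - ·| + δ)` bounded, hence its moment generating function is finite, equals `1` at `0`
and has negative derivative there: it is some `q < 1` at some `t > 0`. The Chernoff bound for the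
i.i.d. sum then bounds the probability of the bad event by `q ^ n`. Finitely many such discs
cover `K`, and a union bound gives the exponential rate.
-/

lemma exists_pos_mgf_lt_one {Ω : Type*} [MeasurableSpace Ω] {P : Measure Ω}
    [IsProbabilityMeasure P] {Y : Ω → ℝ} (hY : ∀ t, Integrable (fun ω => Real.exp (t * Y ω)) P)
    (hneg : P[Y] < 0) : ∃ t > 0, mgf Y P t < 1 := by
  have hderiv : HasDerivAt (mgf Y P) (P[Y]) 0 := by
    simpa using hasDerivAt_mgf (X := Y) (μ := P) (t := 0)
      (by simp [Set.eq_univ_of_forall (s := integrableExpSet Y P) hY])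
  obtain ⟨t, hslope, ht⟩ :=
    ((hderiv.tendsto_slope_zero_right.eventually (gt_mem_nhds hneg)).and
      self_mem_nhdsWithin).exists
  simp only [zero_add, mgf_zero, smul_eq_mul] at hslope
  exact ⟨t, ht, sub_neg.1 (neg_of_mul_neg_right hslope (inv_pos.2 ht).le)⟩

lemma ProbabilityTheory.iIndepFun.measureReal_sum_nonneg_le_prod_mgf {Ω ι : Type*}
    [MeasurableSpace Ω] {P : Measure Ω} [IsFiniteMeasure P] {Y : ι → Ω → ℝ} (hind : iIndepFun Y P)
    (hmeas : ∀ i, Measurable (Y i)) {t : ℝ} (ht : 0 ≤ t)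
    (hint : ∀ i, Integrable (fun ω => Real.exp (t * Y i ω)) P) (s : Finset ι) :
    P.real {ω | 0 ≤ ∑ i ∈ s, Y i ω} ≤ ∏ i ∈ s, mgf (Y i) P t := by
  simpa [hind.mgf_sum hmeas] using
    measure_ge_le_exp_mul_mgf 0 ht (hind.integrable_exp_mul_sum hmeas (s := s) fun i _ => hint i)

lemma IsCompact.exists_pos_eventually_measure_biUnion_le_exp {α Ω : Type*} [TopologicalSpace α]
    [MeasurableSpace Ω] {P : Measure Ω} {K : Set α} (hK : IsCompact K) (A : ℕ → α → Set Ω)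
    (hloc : ∀ x ∈ K, ∃ U ∈ 𝓝 x, ∃ c > 0, ∀ n : ℕ,
      P (⋃ y ∈ U, A n y) ≤ ENNReal.ofReal (Real.exp (-c * n))) :
    ∃ c > 0, ∀ᶠ n : ℕ in atTop, P (⋃ y ∈ K, A n y) ≤ ENNReal.ofReal (Real.exp (-c * n)) := by
  choose! U hU c hc hle using hloc
  obtain ⟨T, hTK, hcover⟩ := hK.elim_nhds_subcover U hU
  obtain ⟨c₀, hc₀T, hc₀⟩ : ∃ c₀, (∀ x ∈ T, c₀ ≤ c x) ∧ 0 < c₀ :=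
    (((Finset.eventually_all T).2 fun x hx =>
      eventually_nhdsWithin_of_eventually_nhds (eventually_le_nhds (hc x (hTK x hx)))).and
      (self_mem_nhdsWithin : Set.Ioi (0 : ℝ) ∈ 𝓝[>] 0)).exists
  refine ⟨c₀ / 2, half_pos hc₀, ?_⟩
  have hgrow : Tendsto (fun n : ℕ => Real.exp (c₀ / 2 * n)) atTop atTop :=
    Real.tendsto_exp_atTop.comp (tendsto_natCast_atTop_atTop.const_mul_atTop (half_pos hc₀))
  filter_upwards [hgrow.eventually_ge_atTop (T.card : ℝ)] with n hn
  calc P (⋃ y ∈ K, A n y) ≤ P (⋃ x ∈ T, ⋃ y ∈ U x, A n y) :=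
        measure_mono fun ω hω => by
          obtain ⟨y, hyK, hy⟩ := Set.mem_iUnion₂.1 hω
          obtain ⟨x, hxT, hyx⟩ := Set.mem_iUnion₂.1 (hcover hyK)
          exact Set.mem_biUnion hxT (Set.mem_biUnion hyx hy)
    _ ≤ ∑ x ∈ T, P (⋃ y ∈ U x, A n y) := measure_biUnion_finset_le _ _
    _ ≤ ∑ _x ∈ T, ENNReal.ofReal (Real.exp (-c₀ * n)) := by
        gcongr with x hx
        refine (hle x (hTK x hx) n).trans (ENNReal.ofReal_le_ofReal (Real.exp_le_exp.2 ?_))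
        nlinarith [hc₀T x hx, (Nat.cast_nonneg n : (0 : ℝ) ≤ n)]
    _ = ENNReal.ofReal (T.card * Real.exp (-c₀ * n)) := by
        rw [Finset.sum_const, nsmul_eq_mul, ENNReal.ofReal_mul (Nat.cast_nonneg _),
          ENNReal.ofReal_natCast]
    _ ≤ ENNReal.ofReal (Real.exp (-(c₀ / 2) * n)) := by
        refine ENNReal.ofReal_le_ofReal ?_
        calc T.card * Real.exp (-c₀ * n) ≤ Real.exp (c₀ / 2 * n) * Real.exp (-c₀ * n) := by
              gcongr
          _ = Real.exp (-(c₀ / 2) * n) := by rw [← Real.exp_add]; ring_nf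

lemma ae_mem_msupport (μ : Measure ℂ) : ∀ᵐ w ∂μ, w ∈ msupport μ := by
  have : msupport μ = μ.support :=
    Set.ext fun x => (Measure.mem_support_iff_forall x).symm
  exact this ▸ Measure.support_mem_ae

lemma AssumptionA.integrable_log_norm_sub {μ : Measure ℂ} [IsFiniteMeasure μ]
    (hA : AssumptionA μ) (z : ℂ) : Integrable (fun w => Real.log ‖z - w‖) μ := by
  obtain ⟨C, hC⟩ := hA {z} isCompact_singleton
  have hmeas : AEStronglyMeasurable (fun w => Real.log ‖z - w‖) μ :=
    (measurable_const.sub measurable_id).norm.log.aestronglyMeasurable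
  refine ((memLp_two_iff_integrable_sq hmeas).2 ⟨hmeas.pow 2, ?_⟩).integrable one_le_two
  rw [hasFiniteIntegral_iff_ofReal (Eventually.of_forall fun w => sq_nonneg _)]
  exact (hC z rfl).trans_lt ENNReal.ofReal_lt_top

noncomputable def smoothedLogDist (z₀ : ℂ) (δ : ℝ) (w : ℂ) : ℝ :=
  Real.log (‖z₀ - w‖ + δ)

lemma measurable_smoothedLogDist (z₀ : ℂ) (δ : ℝ) : Measurable (smoothedLogDist z₀ δ) :=
  ((measurable_const.sub measurable_id).norm.add_const δ).log

lemma abs_smoothedLogDist_le {z₀ w : ℂ} {δ M : ℝ} (hδ : 0 < δ) (hw : ‖z₀ - w‖ ≤ M) :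
    |smoothedLogDist z₀ δ w| ≤ |Real.log δ| + |Real.log (M + δ)| := by
  have hlow : Real.log δ ≤ smoothedLogDist z₀ δ w :=
    Real.log_le_log hδ (le_add_of_nonneg_left (norm_nonneg _))
  have hup : smoothedLogDist z₀ δ w ≤ Real.log (M + δ) :=
    Real.log_le_log (by positivity) (by linarith)
  rw [abs_le]
  constructor <;> linarith [neg_abs_le (Real.log δ), le_abs_self (Real.log (M + δ)),
    abs_nonneg (Real.log δ), abs_nonneg (Real.log (M + δ))]

section BoundedSupport

variable {μ : Measure ℂ} [IsFiniteMeasure μ] {z₀ : ℂ} {M : ℝ}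

lemma integrable_exp_mul_smoothedLogDist (hM : ∀ᵐ w ∂μ, ‖z₀ - w‖ ≤ M) {δ : ℝ} (hδ : 0 < δ)
    (t : ℝ) : Integrable (fun w => Real.exp (t * smoothedLogDist z₀ δ w)) μ := by
  refine Integrable.of_bound
    ((measurable_smoothedLogDist z₀ δ).const_mul t).exp.aestronglyMeasurable
    (Real.exp (|t| * (|Real.log δ| + |Real.log (M + δ)|))) ?_
  filter_upwards [hM] with w hw
  rw [Real.norm_eq_abs, Real.abs_exp, Real.exp_le_exp]
  calc t * smoothedLogDist z₀ δ w ≤ |t| * |smoothedLogDist z₀ δ w| := by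
        rw [← abs_mul]; exact le_abs_self _
    _ ≤ _ := by gcongr; exact abs_smoothedLogDist_le hδ hw

lemma integrable_smoothedLogDist (hM : ∀ᵐ w ∂μ, ‖z₀ - w‖ ≤ M) {δ : ℝ} (hδ : 0 < δ) :
    Integrable (smoothedLogDist z₀ δ) μ := by
  refine Integrable.of_bound (measurable_smoothedLogDist z₀ δ).aestronglyMeasurable
    (|Real.log δ| + |Real.log (M + δ)|) ?_
  filter_upwards [hM] with w hw
  exact abs_smoothedLogDist_le hδ hw

lemma tendsto_max_log_add_log {r : ℝ} (hr : 0 ≤ r) :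
    Tendsto (fun δ => max (Real.log (r + δ)) (Real.log r)) (𝓝[>] 0) (𝓝 (Real.log r)) := by
  rcases hr.eq_or_lt with rfl | hr
  · refine tendsto_const_nhds.congr' ?_
    filter_upwards [Ioo_mem_nhdsGT one_pos] with δ hδ
    simp [Real.log_nonpos hδ.1.le hδ.2.le]
  · have : Tendsto (fun δ => Real.log (r + δ)) (𝓝 0) (𝓝 (Real.log r)) := by
      simpa using ((continuous_const.add continuous_id).tendsto (0 : ℝ)).log
        (by simpa using hr.ne')
    simpa using (this.max (tendsto_const_nhds (x := Real.log r))).mono_left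
      (nhdsWithin_le_nhds (s := Set.Ioi 0))

lemma abs_max_log_add_log_le {r M δ : ℝ} (hr : 0 ≤ r) (hrM : r ≤ M) (hδ : 0 < δ) (hδ1 : δ ≤ 1) :
    |max (Real.log (r + δ)) (Real.log r)| ≤ |Real.log r| + |Real.log (M + 1)| := by
  have hup : Real.log (r + δ) ≤ Real.log (M + 1) := Real.log_le_log (by positivity) (by linarith)
  rw [abs_le]
  constructor
  · linarith [le_max_right (Real.log (r + δ)) (Real.log r), neg_abs_le (Real.log r),
      abs_nonneg (Real.log (M + 1))]
  · exact max_le (by linarith [le_abs_self (Real.log (M + 1)), abs_nonneg (Real.log r)])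
      (by linarith [le_abs_self (Real.log r), abs_nonneg (Real.log (M + 1))])

/-- The `max` with `log |z₀ - w|` only matters at an atom `w = z₀`, where `log 0 = 0` is a junk
value and `log δ → -∞` would spoil dominated convergence. -/
lemma tendsto_integral_max_smoothedLogDist (hM : ∀ᵐ w ∂μ, ‖z₀ - w‖ ≤ M)
    (hint : Integrable (fun w => Real.log ‖z₀ - w‖) μ) :
    Tendsto (fun δ => ∫ w, max (smoothedLogDist z₀ δ w) (Real.log ‖z₀ - w‖) ∂μ) (𝓝[>] 0)
      (𝓝 (logPot μ z₀)) := by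
  refine tendsto_integral_filter_of_dominated_convergence
    (fun w => |Real.log ‖z₀ - w‖| + |Real.log (M + 1)|)
    (Eventually.of_forall fun δ =>
      ((measurable_smoothedLogDist z₀ δ).max
        (measurable_const.sub measurable_id).norm.log).aestronglyMeasurable) ?_
    (hint.abs.add (integrable_const _))
    (Eventually.of_forall fun w => tendsto_max_log_add_log (norm_nonneg _))
  filter_upwards [Ioc_mem_nhdsGT one_pos] with δ hδ
  filter_upwards [hM] with w hw
  exact abs_max_log_add_log_le (norm_nonneg _) hw hδ.1 hδ.2

lemma exists_integral_smoothedLogDist_neg (hM : ∀ᵐ w ∂μ, ‖z₀ - w‖ ≤ M)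
    (hint : Integrable (fun w => Real.log ‖z₀ - w‖) μ) (hneg : logPot μ z₀ < 0) :
    ∃ δ > 0, ∫ w, smoothedLogDist z₀ δ w ∂μ < 0 := by
  obtain ⟨δ, hδneg, hδ⟩ :=
    (((tendsto_integral_max_smoothedLogDist hM hint).eventually (gt_mem_nhds hneg)).and
      (self_mem_nhdsWithin : Set.Ioi (0 : ℝ) ∈ 𝓝[>] 0)).exists
  have hsmooth := integrable_smoothedLogDist hM hδ
  exact ⟨δ, hδ, (integral_mono hsmooth (hsmooth.sup hint) fun w => le_max_left _ _).trans_lt hδneg⟩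

end BoundedSupport

lemma zero_le_sum_smoothedLogDist_of_one_le_norm_prod {ι : Type*} {z z₀ : ℂ} {δ : ℝ}
    (hz : z ∈ ball z₀ δ) (x : ι → ℂ) (s : Finset ι) (h1 : 1 ≤ ‖∏ k ∈ s, (z - x k)‖) :
    0 ≤ ∑ k ∈ s, smoothedLogDist z₀ δ (x k) := by
  have hδ : 0 < δ := pos_of_mem_ball hz
  have hfactor : ∀ k, ‖z - x k‖ ≤ ‖z₀ - x k‖ + δ := fun k => by
    have hzz₀ : ‖z - z₀‖ < δ := by rwa [← dist_eq_norm, ← mem_ball]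
    linarith [norm_sub_le_norm_sub_add_norm_sub z z₀ (x k)]
  unfold smoothedLogDist
  rw [← Real.log_prod fun k _ => by positivity]
  refine Real.log_nonneg (h1.trans ?_)
  rw [norm_prod]
  exact Finset.prod_le_prod (fun k _ => norm_nonneg _) fun k _ => hfactor k

section Lemniscate

variable {Ω : Type*} [MeasurableSpace Ω] {P : Measure Ω} [IsProbabilityMeasure P]
  {μ : Measure ℂ} {X : ℕ → Ω → ℂ}

lemma measure_biUnion_ball_notMem_lemniscate_le (hmeas : ∀ i, Measurable (X i))
    (hid : ∀ i, Measure.map (X i) P = μ) (hindep : iIndepFun X P) {z₀ : ℂ} {δ t : ℝ}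
    (ht : 0 ≤ t) (hint : Integrable (fun w => Real.exp (t * smoothedLogDist z₀ δ w)) μ) (n : ℕ) :
    P (⋃ z ∈ ball z₀ δ, {ω | z ∉ lemniscate X n ω}) ≤
      ENNReal.ofReal (mgf (smoothedLogDist z₀ δ) μ t ^ n) := by
  set Y : ℕ → Ω → ℝ := fun k => smoothedLogDist z₀ δ ∘ X k
  have hYmeas : ∀ k, Measurable (Y k) := fun k =>
    (measurable_smoothedLogDist z₀ δ).comp (hmeas k)
  have hYint : ∀ k, Integrable (fun ω => Real.exp (t * Y k ω)) P := fun k =>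
    (hid k ▸ hint).comp_measurable (hmeas k)
  have hYmgf : ∀ k, mgf (Y k) P t = mgf (smoothedLogDist z₀ δ) μ t := fun k => by
    rw [← hid k, mgf_map (hmeas k).aemeasurable (hid k ▸ hint).aestronglyMeasurable]
  have hbad : ⋃ z ∈ ball z₀ δ, {ω | z ∉ lemniscate X n ω} ⊆
      {ω | 0 ≤ ∑ k ∈ Finset.range n, Y k ω} := by
    simp only [Set.iUnion_subset_iff]
    exact fun z hz ω hω =>
      zero_le_sum_smoothedLogDist_of_one_le_norm_prod hz (X · ω) _ (not_lt.1 hω)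
  calc P (⋃ z ∈ ball z₀ δ, {ω | z ∉ lemniscate X n ω})
      ≤ ENNReal.ofReal (P.real {ω | 0 ≤ ∑ k ∈ Finset.range n, Y k ω}) := by
        rw [ofReal_measureReal]; exact measure_mono hbad
    _ ≤ ENNReal.ofReal (∏ k ∈ Finset.range n, mgf (Y k) P t) :=
        ENNReal.ofReal_le_ofReal <| (hindep.comp _ fun k => measurable_smoothedLogDist z₀ δ)
          |>.measureReal_sum_nonneg_le_prod_mgf hYmeas ht hYint _
    _ = ENNReal.ofReal (mgf (smoothedLogDist z₀ δ) μ t ^ n) := by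
        simp [hYmgf]

lemma exists_nhds_measure_biUnion_notMem_lemniscate_le_exp [IsProbabilityMeasure μ]
    (hS : IsCompact (msupport μ)) (hA : AssumptionA μ) (hmeas : ∀ i, Measurable (X i))
    (hid : ∀ i, Measure.map (X i) P = μ) (hindep : iIndepFun X P) {z₀ : ℂ}
    (hz₀ : logPot μ z₀ < 0) :
    ∃ U ∈ 𝓝 z₀, ∃ c > 0, ∀ n : ℕ,
      P (⋃ z ∈ U, {ω | z ∉ lemniscate X n ω}) ≤ ENNReal.ofReal (Real.exp (-c * n)) := by
  obtain ⟨M, hM⟩ : ∃ M, ∀ᵐ w ∂μ, ‖z₀ - w‖ ≤ M := by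
    obtain ⟨M, hM⟩ := hS.isBounded.subset_closedBall z₀
    refine ⟨M, (ae_mem_msupport μ).mono fun w hw => ?_⟩
    simpa [dist_eq_norm, norm_sub_rev] using hM hw
  obtain ⟨δ, hδ, hneg⟩ := exists_integral_smoothedLogDist_neg hM (hA.integrable_log_norm_sub z₀) hz₀
  have hint := integrable_exp_mul_smoothedLogDist hM hδ
  obtain ⟨t, ht, hlt⟩ := exists_pos_mgf_lt_one hint hneg
  have hpos := mgf_pos (hint t)
  refine ⟨ball z₀ δ, ball_mem_nhds z₀ hδ, -Real.log (mgf (smoothedLogDist z₀ δ) μ t),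
    neg_pos.2 (Real.log_neg hpos hlt), fun n => ?_⟩
  rw [neg_neg, mul_comm, Real.exp_nat_mul, Real.exp_log hpos]
  exact measure_biUnion_ball_notMem_lemniscate_le hmeas hid hindep ht.le (hint t) n

end Lemniscate

theorem statement0_general
    {Ω : Type*} [MeasurableSpace Ω] (P : Measure Ω) [IsProbabilityMeasure P]
    (μ : Measure ℂ) [IsProbabilityMeasure μ] (hS : IsCompact (msupport μ))
    (hA : AssumptionA μ)
    (X : ℕ → Ω → ℂ) (hmeas : ∀ i, Measurable (X i))
    (hid : ∀ i, Measure.map (X i) P = μ)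
    (hindep : iIndepFun X P)
    (K : Set ℂ) (hK : IsCompact K) (hKsub : K ⊆ {z : ℂ | logPot μ z < 0}) :
    ∃ c > (0 : ℝ), ∀ᶠ n : ℕ in atTop,
      1 - ENNReal.ofReal (Real.exp (-c * n)) ≤ P {ω | K ⊆ lemniscate X n ω} := by
  obtain ⟨c, hc, hbad⟩ := hK.exists_pos_eventually_measure_biUnion_le_exp
    (fun n z => {ω | z ∉ lemniscate X n ω}) fun z hz =>
      exists_nhds_measure_biUnion_notMem_lemniscate_le_exp hS hA hmeas hid hindep (hKsub hz)
  refine ⟨c, hc, hbad.mono fun n hn => ?_⟩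
  have hcompl : {ω | K ⊆ lemniscate X n ω}ᶜ = ⋃ z ∈ K, {ω | z ∉ lemniscate X n ω} := by
    ext ω
    simp [Set.not_subset]
  rw [tsub_le_iff_right, ← measure_univ (μ := P)]
  calc P Set.univ ≤ P {ω | K ⊆ lemniscate X n ω} + P {ω | K ⊆ lemniscate X n ω}ᶜ :=
        measure_univ_le_add_compl _
    _ ≤ _ := by rw [hcompl]; gcongr

theorem statement0
    {Ω : Type*} [MeasurableSpace Ω] (P : Measure Ω) [IsProbabilityMeasure P]
    (μ : Measure ℂ) [IsProbabilityMeasure μ] (hS : IsCompact (msupport μ))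
    (hA : AssumptionA μ)
    (X : ℕ → Ω → ℂ) (hmeas : ∀ i, Measurable (X i))
    (hid : ∀ i, Measure.map (X i) P = μ)
    (hindep : iIndepFun X P)
    (hneg : Set.Nonempty {z : ℂ | logPot μ z < 0})
    (K : Set ℂ) (hK : IsCompact K) (hKsub : K ⊆ {z : ℂ | logPot μ z < 0}) :
    ∃ c > (0 : ℝ), ∀ᶠ n : ℕ in atTop,
      1 - ENNReal.ofReal (Real.exp (-c * n)) ≤ P {ω | K ⊆ lemniscate X n ω} :=
  statement0_general P μ hS hA X hmeas hid hindep K hK hKsub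
end

section
/- Assume μ satisfies Assumption (D). Let m > 0 and let L be a compact subset of {z ∈ ℂ : U_μ(z) ≥ m}. Then there exist constants c₀ > 0 and c > 0 such that for all sufficiently large n, the probability that Λ_n ∩ L ⊆ ⋃_{k=1}^n B(X_k, e^{−c₀ n}) is at least 1 − e^{−cn}, where B(x, r) denotes the open disk of radius r centered at x. -/
/-!
Write `S_n(y) = ∑_{k<n} log |y - X_k|`. If `z ∈ Λ_n ∩ L` lies at distance at least
`δ = e^{-c₀ n}` from every root, then `S_n(z) = log |p_n(z)| < 0`, and at a point `y ∈ L` within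
`θ δ` of `z` each term grows by at most `θ`, so `S_n(y) < θ n`. Covering `L` by `O(δ⁻²)` of its
own points, it suffices that `P(S_n(y) < θ n) ≤ e^{-c' n}` uniformly in `y ∈ L` with `2 c₀ < c'`.
This is a Chernoff bound: Assumption (D) bounds `∫ |y - w|^{-a} dμ(w)` for `a < ε` uniformly in
`y`, and a second-order expansion of `|y - w|^{-l}` together with `U_μ(y) ≥ m` gives
`E |y - X|^{-l} ≤ e^{-l m / 2}` for a small fixed `l > 0`.
-/

open MeasureTheory ProbabilityTheory Filter Metric

open Real
open scoped ENNReal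

lemma exp_le_one_add_add_sq_mul (x : ℝ) : exp x ≤ 1 + x + x ^ 2 * (1 + exp x) := by
  have key : exp x * (1 - x) ≤ 1 := by
    have := mul_le_mul_of_nonneg_left (by linarith [add_one_le_exp (-x)] : 1 - x ≤ exp (-x))
      (exp_pos x).le
    rwa [← exp_add, add_neg_cancel, exp_zero] at this
  rcases le_total 0 x with hx | hx
  · nlinarith [add_one_le_exp x, exp_pos x]
  · have : exp x ≤ 1 + x + x ^ 2 := by
      by_contra! h
      nlinarith [mul_lt_mul_of_pos_right h (by linarith : (0 : ℝ) < 1 - x)]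
    nlinarith [exp_pos x, pow_two_nonneg x]

lemma sq_mul_one_add_exp_le {a l M y : ℝ} (ha : 0 < a) (hl : 0 ≤ l) (hla : l ≤ a / 2)
    (hy : y ≤ M) : y ^ 2 * (1 + exp (-l * y)) ≤ 2 * M ^ 2 + 16 / a ^ 2 * exp (-a * y) := by
  have hexp : 0 ≤ 16 / a ^ 2 * exp (-a * y) := by positivity
  rcases le_total 0 y with hy0 | hy0
  · have : exp (-l * y) ≤ 1 := exp_le_one_iff.mpr (by nlinarith)
    nlinarith [pow_le_pow_left₀ hy0 hy 2]
  · set s := -a * y / 2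
    have hs : 0 ≤ s := by simp only [s]; nlinarith
    have hsq : s ^ 2 / 2 ≤ exp s := by simpa using pow_div_factorial_le_exp s hs 2
    have hy2 : y ^ 2 ≤ 8 / a ^ 2 * exp s := by
      rw [show y = -2 * s / a by field_simp; ring, div_pow, div_le_iff₀ (by positivity)]
      field_simp
      nlinarith
    have h1 : 1 + exp (-l * y) ≤ 2 * exp s := by
      have : exp (-l * y) ≤ exp s := exp_le_exp.mpr (by simp only [s]; nlinarith)
      linarith [one_le_exp hs]
    calc y ^ 2 * (1 + exp (-l * y)) ≤ 8 / a ^ 2 * exp s * (2 * exp s) := by gcongr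
      _ = 16 / a ^ 2 * exp (-a * y) := by rw [mul_mul_mul_comm, ← exp_add]; simp only [s]; ring_nf
      _ ≤ _ := by nlinarith [sq_nonneg M]

lemma exp_neg_mul_le_of_le {a l M y : ℝ} (ha : 0 < a) (hl : 0 ≤ l) (hla : l ≤ a / 2)
    (hy : y ≤ M) :
    exp (-l * y) ≤ 1 - l * y + l ^ 2 * (2 * M ^ 2 + 16 / a ^ 2 * exp (-a * y)) := by
  calc exp (-l * y) ≤ 1 + -l * y + (-l * y) ^ 2 * (1 + exp (-l * y)) :=
        exp_le_one_add_add_sq_mul _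
    _ = 1 - l * y + l ^ 2 * (y ^ 2 * (1 + exp (-l * y))) := by ring
    _ ≤ _ := by gcongr; exact sq_mul_one_add_exp_le ha hl hla hy

section ExpMoment

variable {α : Type*} [MeasurableSpace α] {ν : Measure α} {f : α → ℝ}

lemma integrable_exp_of_lintegral_le {K : ℝ} (hf : Measurable f) (hK0 : 0 ≤ K)
    (hK : ∫⁻ x, ENNReal.ofReal (exp (f x)) ∂ν ≤ ENNReal.ofReal K) :
    Integrable (fun x => exp (f x)) ν ∧ ∫ x, exp (f x) ∂ν ≤ K := by
  have hmeas : AEStronglyMeasurable (fun x => exp (f x)) ν := hf.exp.aestronglyMeasurable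
  have hpos : 0 ≤ᵐ[ν] fun x => exp (f x) := ae_of_all _ fun x => (exp_pos _).le
  refine ⟨⟨hmeas, (hasFiniteIntegral_iff_ofReal hpos).mpr (hK.trans_lt ENNReal.ofReal_lt_top)⟩,
    ?_⟩
  rw [integral_eq_lintegral_of_nonneg_ae hpos hmeas]
  exact ENNReal.toReal_le_of_le_ofReal hK0 hK

variable [IsFiniteMeasure ν]

lemma integrable_of_ae_le_of_integrable_exp_neg_mul {a M : ℝ} (hf : Measurable f) (ha : 0 < a)
    (hfM : ∀ᵐ x ∂ν, f x ≤ M) (hG : Integrable (fun x => exp (-a * f x)) ν) :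
    Integrable f ν := by
  refine ((integrable_const |M|).add (hG.div_const a)).mono' hf.aestronglyMeasurable ?_
  filter_upwards [hfM] with x hx
  have : -f x ≤ exp (-a * f x) / a := by
    rw [le_div_iff₀ ha]; linarith [add_one_le_exp (-a * f x)]
  rw [Pi.add_apply, norm_eq_abs, abs_le]
  constructor <;> linarith [le_abs_self M, neg_abs_le M, div_pos (exp_pos (-a * f x)) ha]

lemma integrable_exp_neg_mul_of_le {a l : ℝ} (hf : Measurable f) (hl : 0 ≤ l) (hla : l ≤ a)
    (hG : Integrable (fun x => exp (-a * f x)) ν) : Integrable (fun x => exp (-l * f x)) ν := by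
  refine ((integrable_const 1).add hG).mono' (hf.const_mul _).exp.aestronglyMeasurable
    (ae_of_all _ fun x => ?_)
  rw [Pi.add_apply, norm_of_nonneg (exp_pos _).le]
  rcases le_total 0 (f x) with h | h
  · linarith [exp_le_one_iff.mpr (by nlinarith : -l * f x ≤ 0), exp_pos (-a * f x)]
  · linarith [exp_le_exp.mpr (by nlinarith : -l * f x ≤ -a * f x)]

variable [IsProbabilityMeasure ν]

/-- Second-order Taylor expansion of `exp (-l f)`; the error term is dominated by the exponential
moment of order `a`. -/
theorem lintegral_exp_neg_mul_le {a M K m l : ℝ} (hf : Measurable f) (ha : 0 < a)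
    (hfM : ∀ᵐ x ∂ν, f x ≤ M) (hK0 : 0 ≤ K)
    (hK : ∫⁻ x, ENNReal.ofReal (exp (-a * f x)) ∂ν ≤ ENNReal.ofReal K)
    (hm : m ≤ ∫ x, f x ∂ν) (hl : 0 ≤ l) (hla : l ≤ a / 2)
    (hlB : l * (2 * M ^ 2 + 16 / a ^ 2 * K) ≤ m / 2) :
    ∫⁻ x, ENNReal.ofReal (exp (-l * f x)) ∂ν ≤ ENNReal.ofReal (exp (-(l * m / 2))) := by
  obtain ⟨hGint, hGK⟩ := integrable_exp_of_lintegral_le (hf.const_mul (-a)) hK0 hK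
  have hfint := integrable_of_ae_le_of_integrable_exp_neg_mul hf ha hfM hGint
  have hexp_int := integrable_exp_neg_mul_of_le hf hl (by linarith) hGint
  have hlin : Integrable (fun x => 1 - l * f x) ν := (integrable_const 1).sub (hfint.const_mul l)
  have hquad : Integrable (fun x => 2 * M ^ 2 + 16 / a ^ 2 * exp (-a * f x)) ν :=
    (integrable_const _).add (hGint.const_mul _)
  have hbound :
      ∫ x, exp (-l * f x) ∂ν ≤ 1 - l * m + l ^ 2 * (2 * M ^ 2 + 16 / a ^ 2 * K) := by
    calc ∫ x, exp (-l * f x) ∂ν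
        ≤ ∫ x, (1 - l * f x + l ^ 2 * (2 * M ^ 2 + 16 / a ^ 2 * exp (-a * f x))) ∂ν := by
          refine integral_mono_ae hexp_int (hlin.add (hquad.const_mul _)) ?_
          filter_upwards [hfM] with x hx using exp_neg_mul_le_of_le ha hl hla hx
      _ = 1 - l * ∫ x, f x ∂ν +
            l ^ 2 * (2 * M ^ 2 + 16 / a ^ 2 * ∫ x, exp (-a * f x) ∂ν) := by
          rw [integral_add hlin (hquad.const_mul _), integral_sub (integrable_const 1)
            (hfint.const_mul l), integral_const_mul, integral_const_mul,
            integral_add (integrable_const _) (hGint.const_mul _), integral_const_mul,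
            integral_const_mul]
          simp
      _ ≤ _ := by gcongr
  rw [← ofReal_integral_eq_lintegral_ofReal hexp_int (ae_of_all _ fun x => (exp_pos _).le)]
  refine ENNReal.ofReal_le_ofReal ?_
  nlinarith [add_one_le_exp (-(l * m / 2))]

end ExpMoment

section NegativeMoment

/- `exp (-a * log ‖z - w‖)` is `‖z - w‖ ^ (-a)` for `w ≠ z`, and `1` at `w = z`
since `log 0 = 0`. -/

variable {E : Type*} [NormedAddCommGroup E]

lemma ofReal_exp_neg_mul_log_le_tsum {a : ℝ} (ha : 0 ≤ a) (z w : E) :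
    ENNReal.ofReal (exp (-a * log ‖z - w‖)) ≤
      1 + ∑' j : ℕ,
        (ball z (exp (-j))).indicator (fun _ => ENNReal.ofReal (exp (a * (j + 1)))) w := by
  rcases le_or_gt 0 (log ‖z - w‖) with hlog | hlog
  · have : exp (-a * log ‖z - w‖) ≤ 1 := exp_le_one_iff.mpr (by nlinarith)
    exact le_add_right (ENNReal.ofReal_le_one.mpr this)
  set t := -log ‖z - w‖
  have ht : 0 < t := by simp only [t]; linarith
  set j := ⌈t⌉₊ - 1
  have hj : (j : ℝ) + 1 = ⌈t⌉₊ := by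
    have : 1 ≤ ⌈t⌉₊ := Nat.one_le_iff_ne_zero.mpr (Nat.ceil_pos.mpr ht).ne'
    simp only [j]; push_cast [this]; ring
  have hjt : (j : ℝ) < t := by linarith [Nat.ceil_lt_add_one ht.le]
  have hmem : w ∈ ball z (exp (-j)) := by
    have hpos : 0 < ‖z - w‖ := by
      by_contra! h0
      simp [norm_le_zero_iff.mp h0] at hlog
    rw [mem_ball, dist_comm, dist_eq_norm, ← exp_log hpos]
    exact exp_lt_exp.mpr (by linarith)
  calc ENNReal.ofReal (exp (-a * log ‖z - w‖))
      ≤ ENNReal.ofReal (exp (a * (j + 1))) := by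
        refine ENNReal.ofReal_le_ofReal (exp_le_exp.mpr ?_)
        rw [hj, show -a * log ‖z - w‖ = a * t by ring]
        exact mul_le_mul_of_nonneg_left (Nat.le_ceil t) ha
    _ = (ball z (exp (-j))).indicator (fun _ => ENNReal.ofReal (exp (a * (j + 1)))) w :=
        (Set.indicator_of_mem hmem fun _ => _).symm
    _ ≤ _ := (ENNReal.le_tsum j).trans le_add_self

variable [MeasurableSpace E] [OpensMeasurableSpace E] {ν : Measure E} [IsProbabilityMeasure ν]

/-- The integrand exceeds `1` only on the balls `ball z (exp (-j))`, whose masses decay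
geometrically faster than the values `exp (a (j + 1))` grow. -/
theorem lintegral_exp_neg_mul_log_le {C ε a : ℝ} (z : E) (hC : 0 ≤ C) (ha : 0 ≤ a)
    (haε : a < ε) (hball : ∀ r, 0 < r → ν (ball z r) ≤ ENNReal.ofReal (C * r ^ ε)) :
    ∫⁻ w, ENNReal.ofReal (exp (-a * log ‖z - w‖)) ∂ν ≤
      ENNReal.ofReal (1 + C * exp a / (1 - exp (a - ε))) := by
  set q := exp (a - ε)
  have hq : q < 1 := exp_lt_one_iff.mpr (by linarith)
  have hterm : ∀ j : ℕ, ENNReal.ofReal (exp (a * (j + 1))) * ν (ball z (exp (-j))) ≤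
      ENNReal.ofReal (C * exp a * q ^ j) := by
    intro j
    calc ENNReal.ofReal (exp (a * (j + 1))) * ν (ball z (exp (-j)))
        ≤ ENNReal.ofReal (exp (a * (j + 1))) * ENNReal.ofReal (C * exp (-j) ^ ε) :=
          by gcongr; exact hball _ (exp_pos _)
      _ = ENNReal.ofReal (C * exp a * q ^ j) := by
          rw [← ENNReal.ofReal_mul (exp_pos _).le, ← exp_mul, ← exp_nat_mul]
          congr 1
          rw [mul_left_comm, mul_assoc, ← exp_add, ← exp_add]
          ring_nf
  have hsum : HasSum (fun j : ℕ => C * exp a * q ^ j) (C * exp a / (1 - q)) := by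
    simpa [div_eq_mul_inv] using (hasSum_geometric_of_lt_one (exp_pos _).le hq).mul_left (C * exp a)
  calc ∫⁻ w, ENNReal.ofReal (exp (-a * log ‖z - w‖)) ∂ν
      ≤ ∫⁻ w, (1 + ∑' j : ℕ, (ball z (exp (-j))).indicator
          (fun _ => ENNReal.ofReal (exp (a * (j + 1)))) w) ∂ν :=
        lintegral_mono fun w => ofReal_exp_neg_mul_log_le_tsum ha z w
    _ = 1 + ∑' j : ℕ, ENNReal.ofReal (exp (a * (j + 1))) * ν (ball z (exp (-j))) := by
        rw [lintegral_add_left measurable_const, lintegral_const, measure_univ, mul_one,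
          lintegral_tsum fun j => (measurable_const.indicator measurableSet_ball).aemeasurable]
        simp_rw [lintegral_indicator measurableSet_ball, setLIntegral_const]
    _ ≤ 1 + ∑' j : ℕ, ENNReal.ofReal (C * exp a * q ^ j) := by gcongr with j; exact hterm j
    _ = ENNReal.ofReal (1 + C * exp a / (1 - q)) := by
        rw [← ENNReal.ofReal_tsum_of_nonneg (fun j => by positivity) hsum.summable, hsum.tsum_eq,
          ENNReal.ofReal_add zero_le_one (div_nonneg (by positivity) (by linarith)),
          ENNReal.ofReal_one]

end NegativeMoment

theorem measure_sum_lt_le_exp_mul_pow {Ω α : Type*} [MeasurableSpace Ω] [MeasurableSpace α]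
    {P : Measure Ω} {μ : Measure α} {X : ℕ → Ω → α} (hmeas : ∀ i, Measurable (X i))
    (hid : ∀ i, Measure.map (X i) P = μ) (hindep : iIndepFun X P) {g : α → ℝ}
    (hg : Measurable g) {l : ℝ} (hl : 0 ≤ l) (t : ℝ) (n : ℕ) :
    P {ω | ∑ k ∈ Finset.range n, g (X k ω) < t} ≤
      ENNReal.ofReal (exp (l * t)) * (∫⁻ x, ENNReal.ofReal (exp (-l * g x)) ∂μ) ^ n := by
  set G : α → ℝ≥0∞ := fun x => ENNReal.ofReal (exp (-l * g x))
  have hG : Measurable G := (hg.const_mul _).exp.ennreal_ofReal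
  have hprod : ∀ ω, ∏ k ∈ Finset.range n, G (X k ω) =
      ENNReal.ofReal (exp (-l * ∑ k ∈ Finset.range n, g (X k ω))) := by
    intro ω
    rw [← ENNReal.ofReal_prod_of_nonneg fun _ _ => (exp_pos _).le, ← exp_sum, Finset.mul_sum]
  have hsub : {ω | ∑ k ∈ Finset.range n, g (X k ω) < t} ⊆
      {ω | ENNReal.ofReal (exp (-l * t)) ≤ ∏ k ∈ Finset.range n, G (X k ω)} := by
    intro ω hω
    rw [Set.mem_ofPred_eq] at hω
    rw [Set.mem_ofPred_eq, hprod]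
    exact ENNReal.ofReal_le_ofReal (exp_le_exp.mpr (by nlinarith))
  have hmarkov := meas_ge_le_lintegral_div (μ := P)
    (f := fun ω => ∏ k ∈ Finset.range n, G (X k ω))
    (Finset.measurable_prod _ fun k _ => hG.comp (hmeas k)).aemeasurable
    (ENNReal.ofReal_pos.mpr (exp_pos (-l * t))).ne' ENNReal.ofReal_ne_top
  rw [lintegral_prod_eq_prod_lintegral_of_indepFun _ (fun k ω => G (X k ω))
    (hindep.comp _ fun _ => hG) fun k => hG.comp (hmeas k)] at hmarkov
  simp_rw [← lintegral_map hG (hmeas _), hid, Finset.prod_const, Finset.card_range] at hmarkov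
  calc _ ≤ _ := (measure_mono hsub).trans hmarkov
    _ = _ := by
      rw [ENNReal.div_eq_inv_mul, ← ENNReal.ofReal_inv_of_pos (exp_pos _), ← exp_neg, neg_mul,
        neg_neg]

theorem measure_sum_lt_le_exp {Ω α : Type*} [MeasurableSpace Ω] [MeasurableSpace α]
    {P : Measure Ω} {μ : Measure α} {X : ℕ → Ω → α} (hmeas : ∀ i, Measurable (X i))
    (hid : ∀ i, Measure.map (X i) P = μ) (hindep : iIndepFun X P) {g : α → ℝ}
    (hg : Measurable g) {l m s : ℝ} (hl : 0 ≤ l) (hs : s ≤ m / 4)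
    (hmom : ∫⁻ x, ENNReal.ofReal (exp (-l * g x)) ∂μ ≤ ENNReal.ofReal (exp (-(l * m / 2))))
    (n : ℕ) :
    P {ω | ∑ k ∈ Finset.range n, g (X k ω) < s * n} ≤
      ENNReal.ofReal (exp (-(l * m / 4) * n)) := by
  refine (measure_sum_lt_le_exp_mul_pow hmeas hid hindep hg hl _ n).trans ?_
  calc ENNReal.ofReal (exp (l * (s * n))) * (∫⁻ x, ENNReal.ofReal (exp (-l * g x)) ∂μ) ^ n
      ≤ ENNReal.ofReal (exp (l * (s * n))) * ENNReal.ofReal (exp (-(l * m / 2))) ^ n := by gcongr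
    _ = ENNReal.ofReal (exp (l * (s * n) - l * m / 2 * n)) := by
        rw [← ENNReal.ofReal_pow (exp_pos _).le, ← ENNReal.ofReal_mul (exp_pos _).le,
          ← exp_nat_mul, ← exp_add]
        ring_nf
    _ ≤ _ := by
        gcongr
        nlinarith [mul_le_mul_of_nonneg_left hs hl, (Nat.cast_nonneg n : (0 : ℝ) ≤ n)]

lemma abs_sub_lt_of_floor_div_eq {s x y : ℝ} (hs : 0 < s) (h : ⌊x / s⌋ = ⌊y / s⌋) :
    |x - y| < s := by
  have := Int.abs_sub_lt_one_of_floor_eq_floor h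
  rwa [← sub_div, abs_div, abs_of_pos hs, div_lt_one hs] at this

lemma card_Icc_floor_div_le {R s : ℝ} (hR : 0 ≤ R) (hs : 0 < s) :
    ((Finset.Icc ⌊-R / s⌋ ⌊R / s⌋).card : ℝ) ≤ 2 * R / s + 2 := by
  have hle : ⌊-R / s⌋ ≤ ⌊R / s⌋ + 1 := by
    have := Int.floor_mono (div_le_div_of_nonneg_right (neg_le_self hR) hs.le)
    omega
  have hcard :
      ((Finset.Icc ⌊-R / s⌋ ⌊R / s⌋).card : ℝ) = ⌊R / s⌋ + 1 - ⌊-R / s⌋ := by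
    exact_mod_cast Int.card_Icc_of_le _ _ hle
  rw [hcard, neg_div, mul_div_assoc]
  linarith [Int.floor_le (R / s), Int.lt_floor_add_one (-(R / s))]

/-- The net consists of one point from each nonempty cell of the square grid of mesh `h / 2`. -/
theorem exists_finset_subset_card_le (S : Set ℂ) {R h : ℝ} (hR : 0 ≤ R)
    (hS : ∀ z ∈ S, ‖z‖ ≤ R) (hh : 0 < h) (h1 : h ≤ 1) :
    ∃ t : Finset ℂ, ↑t ⊆ S ∧ (t.card : ℝ) ≤ ((4 * R + 2) / h) ^ 2 ∧
      ∀ z ∈ S, ∃ y ∈ t, ‖z - y‖ < h := by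
  classical
  set s := h / 2
  have hs : 0 < s := half_pos hh
  let cell : ℂ → ℤ × ℤ := fun z => (⌊z.re / s⌋, ⌊z.im / s⌋)
  set I := Finset.Icc ⌊-R / s⌋ ⌊R / s⌋
  have hmemI : ∀ x : ℝ, |x| ≤ R → ⌊x / s⌋ ∈ I := fun x hx => Finset.mem_Icc.mpr
    ⟨Int.floor_mono (div_le_div_of_nonneg_right (neg_le_of_abs_le hx) hs.le),
      Int.floor_mono (div_le_div_of_nonneg_right (le_of_abs_le hx) hs.le)⟩
  have hIcard : (I.card : ℝ) ≤ 4 * R / h + 2 := by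
    rw [show 4 * R / h + 2 = 2 * R / s + 2 by simp only [s]; ring]
    exact card_Icc_floor_div_le hR hs
  refine ⟨((I ×ˢ I).image (Function.invFunOn cell S)).filter (· ∈ S),
    fun y hy => (Finset.mem_filter.mp hy).2, ?_, ?_⟩
  · calc ((((I ×ˢ I).image (Function.invFunOn cell S)).filter (· ∈ S)).card : ℝ)
        ≤ (I.card : ℝ) ^ 2 := by
          rw [sq, ← Nat.cast_mul, ← Finset.card_product]
          exact_mod_cast (Finset.card_filter_le _ _).trans Finset.card_image_le
      _ ≤ (4 * R / h + 2) ^ 2 := by gcongr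
      _ ≤ ((4 * R + 2) / h) ^ 2 := by
          gcongr
          rw [add_div]
          gcongr
          rw [le_div_iff₀ hh]
          linarith
  · intro z hz
    have hex : ∃ w ∈ S, cell w = cell z := ⟨z, hz, rfl⟩
    set y := Function.invFunOn cell S (cell z)
    have hcell : cell y = cell z := Function.invFunOn_eq hex
    refine ⟨y, Finset.mem_filter.mpr
      ⟨Finset.mem_image_of_mem _ ?_, Function.invFunOn_mem hex⟩, ?_⟩
    · exact Finset.mem_product.mpr ⟨hmemI _ ((Complex.abs_re_le_norm z).trans (hS z hz)),
        hmemI _ ((Complex.abs_im_le_norm z).trans (hS z hz))⟩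
    · have hre := abs_sub_lt_of_floor_div_eq hs (congrArg Prod.fst hcell).symm
      have him := abs_sub_lt_of_floor_div_eq hs (congrArg Prod.snd hcell).symm
      calc ‖z - y‖ ≤ |(z - y).re| + |(z - y).im| := Complex.norm_le_abs_re_add_abs_im _
        _ < s + s := by rw [Complex.sub_re, Complex.sub_im]; exact add_lt_add hre him
        _ = h := add_halves h

lemma log_norm_sub_le_add {E : Type*} [SeminormedAddCommGroup E] {x y z : E} {δ θ : ℝ}
    (hδ : 0 < δ) (hθ : θ < 1) (hfar : δ ≤ ‖z - x‖) (hzy : ‖z - y‖ ≤ θ * δ) :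
    log ‖y - x‖ ≤ log ‖z - x‖ + θ := by
  have hθ0 : 0 ≤ θ := nonneg_of_mul_nonneg_left ((norm_nonneg _).trans hzy) hδ
  have ha : 0 < ‖z - x‖ := hδ.trans_le hfar
  have hupper : ‖y - x‖ ≤ ‖z - x‖ + ‖z - y‖ := by
    simpa [sub_sub_sub_cancel_left] using norm_sub_le (z - x) (z - y)
  have hlower : ‖z - x‖ - ‖z - y‖ ≤ ‖y - x‖ := by
    simpa [sub_sub_sub_cancel_left] using norm_sub_norm_le (z - x) (z - y)
  have hb : 0 < ‖y - x‖ := by nlinarith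
  calc log ‖y - x‖ = log ‖z - x‖ + log (‖y - x‖ / ‖z - x‖) := by
        rw [log_div hb.ne' ha.ne']; ring
    _ ≤ log ‖z - x‖ + (‖y - x‖ / ‖z - x‖ - 1) := by
        gcongr; exact log_le_sub_one_of_pos (by positivity)
    _ ≤ log ‖z - x‖ + θ := by
        gcongr
        rw [div_sub_one ha.ne', div_le_iff₀ ha]
        nlinarith

/-- At a point `z` of the lemniscate at distance `≥ δ` from all roots, `∑ log ‖z - X k ω‖ < 0`;
moving to a net point raises each term by at most `θ`. -/
theorem lemniscate_inter_subset_iUnion_ball {Ω : Type*} (X : ℕ → Ω → ℂ) (n : ℕ) (ω : Ω)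
    {S : Set ℂ} {t : Finset ℂ} {δ θ : ℝ} (hδ : 0 < δ) (hθ : θ < 1)
    (hnet : ∀ z ∈ S, ∃ y ∈ t, ‖z - y‖ ≤ θ * δ)
    (hgood : ∀ y ∈ t, θ * n ≤ ∑ k ∈ Finset.range n, log ‖y - X k ω‖) :
    lemniscate X n ω ∩ S ⊆ ⋃ k ∈ Finset.range n, ball (X k ω) δ := by
  rintro z ⟨hz, hzS⟩
  by_contra hno
  simp only [Set.mem_iUnion, mem_ball, dist_eq_norm, not_exists, not_lt] at hno
  obtain ⟨y, hyt, hzy⟩ := hnet z hzS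
  have hpos : 0 < ∏ k ∈ Finset.range n, ‖z - X k ω‖ :=
    Finset.prod_pos fun k hk => hδ.trans_le (hno k hk)
  have hneg : ∑ k ∈ Finset.range n, log ‖z - X k ω‖ < 0 := by
    rw [← log_prod fun k hk => (hδ.trans_le (hno k hk)).ne']
    exact log_neg hpos (by simpa [lemniscate, norm_prod] using hz)
  have hsum : ∑ k ∈ Finset.range n, log ‖y - X k ω‖ ≤
      ∑ k ∈ Finset.range n, (log ‖z - X k ω‖ + θ) :=
    Finset.sum_le_sum fun k hk => log_norm_sub_le_add hδ hθ (hno k hk) hzy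
  simp only [Finset.sum_add_distrib, Finset.sum_const, Finset.card_range, nsmul_eq_mul] at hsum
  linarith [hgood y hyt]

lemma msupport_eq_support (μ : Measure ℂ) : msupport μ = μ.support := by
  ext x
  simp [msupport, Measure.mem_support_iff_forall]

lemma exists_ae_log_norm_sub_le {μ : Measure ℂ} (hS : IsCompact (msupport μ)) {L : Set ℂ}
    (hL : Bornology.IsBounded L) : ∃ M, ∀ z ∈ L, ∀ᵐ w ∂μ, log ‖z - w‖ ≤ M := by
  obtain ⟨R₁, hR₁⟩ := hL.exists_norm_le
  obtain ⟨R₂, hR₂⟩ := hS.isBounded.exists_norm_le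
  refine ⟨R₁ + R₂, fun z hz => ?_⟩
  filter_upwards [Measure.support_mem_ae (μ := μ)] with w hw
  rw [← msupport_eq_support] at hw
  calc log ‖z - w‖ ≤ ‖z - w‖ := log_le_self (norm_nonneg _)
    _ ≤ ‖z‖ + ‖w‖ := norm_sub_le z w
    _ ≤ R₁ + R₂ := add_le_add (hR₁ z hz) (hR₂ w hw)

theorem exists_pos_forall_lintegral_exp_neg_mul_log_le {μ : Measure ℂ} [IsProbabilityMeasure μ]
    (hS : IsCompact (msupport μ)) (hD : AssumptionD μ) {m : ℝ} (hm : 0 < m) {L : Set ℂ}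
    (hL : Bornology.IsBounded L) (hLsub : L ⊆ {z : ℂ | m ≤ logPot μ z}) :
    ∃ l > 0, ∀ z ∈ L, ∫⁻ w, ENNReal.ofReal (exp (-l * log ‖z - w‖)) ∂μ ≤
      ENNReal.ofReal (exp (-(l * m / 2))) := by
  obtain ⟨C, ε, hε, hball⟩ := hD
  obtain ⟨M, hM⟩ := exists_ae_log_norm_sub_le hS hL
  set a := ε / 2
  have ha : 0 < a := half_pos hε
  have haε : a < ε := half_lt_self hε
  set K := 1 + max C 0 * exp a / (1 - exp (a - ε))
  have hK : 1 ≤ K := by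
    have : 0 < 1 - exp (a - ε) := sub_pos.mpr (exp_lt_one_iff.mpr (by linarith))
    simp only [K, le_add_iff_nonneg_right]
    positivity
  set B := 2 * M ^ 2 + 16 / a ^ 2 * K
  have hB : 0 < B := by positivity
  refine ⟨min (a / 2) (m / (2 * B)), by positivity, fun z hz => ?_⟩
  have hmomK :
      ∫⁻ w, ENNReal.ofReal (exp (-a * log ‖z - w‖)) ∂μ ≤ ENNReal.ofReal K := by
    refine lintegral_exp_neg_mul_log_le z (le_max_right C 0) ha.le haε fun r hr =>
      (hball z r hr).trans (ENNReal.ofReal_le_ofReal ?_)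
    exact mul_le_mul_of_nonneg_right (le_max_left C 0) (rpow_nonneg hr.le ε)
  refine lintegral_exp_neg_mul_le (by fun_prop) ha (hM z hz) (by linarith) hmomK (hLsub hz)
    (by positivity) (min_le_left _ _) ?_
  calc min (a / 2) (m / (2 * B)) * B ≤ m / (2 * B) * B := by gcongr; exact min_le_right _ _
    _ = m / 2 := by field_simp

theorem one_sub_le_measure_lemniscate_inter_subset {Ω : Type*} [MeasurableSpace Ω]
    {P : Measure Ω} [IsProbabilityMeasure P] {μ : Measure ℂ} {X : ℕ → Ω → ℂ}
    (hmeas : ∀ i, Measurable (X i)) (hid : ∀ i, Measure.map (X i) P = μ)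
    (hindep : iIndepFun X P) {l m θ δ : ℝ} (hl : 0 ≤ l) (hθm : θ ≤ m / 4) (hθ : θ < 1)
    (hδ : 0 < δ) {L : Set ℂ} {t : Finset ℂ} (hnet : ∀ z ∈ L, ∃ y ∈ t, ‖z - y‖ ≤ θ * δ)
    (hmom : ∀ y ∈ t, ∫⁻ w, ENNReal.ofReal (exp (-l * log ‖y - w‖)) ∂μ ≤
      ENNReal.ofReal (exp (-(l * m / 2)))) (n : ℕ) :
    1 - t.card * ENNReal.ofReal (exp (-(l * m / 4) * n)) ≤
      P {ω | lemniscate X n ω ∩ L ⊆ ⋃ k ∈ Finset.range n, ball (X k ω) δ} := by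
  set bad := ⋃ y ∈ t, {ω | ∑ k ∈ Finset.range n, log ‖y - X k ω‖ < θ * n}
  have hgood : Set.univ \ bad ⊆
      {ω | lemniscate X n ω ∩ L ⊆ ⋃ k ∈ Finset.range n, ball (X k ω) δ} := by
    intro ω hω
    simp only [bad, Set.mem_sdiff, Set.mem_iUnion, Set.mem_ofPred_eq, not_exists, not_lt] at hω
    exact lemniscate_inter_subset_iUnion_ball X n ω hδ hθ hnet hω.2
  have hbad : P bad ≤ t.card * ENNReal.ofReal (exp (-(l * m / 4) * n)) := by
    calc P bad ≤ ∑ y ∈ t, P {ω | ∑ k ∈ Finset.range n, log ‖y - X k ω‖ < θ * n} :=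
          measure_biUnion_finset_le _ _
      _ ≤ ∑ y ∈ t, ENNReal.ofReal (exp (-(l * m / 4) * n)) :=
          Finset.sum_le_sum fun y hy => measure_sum_lt_le_exp hmeas hid hindep (by fun_prop)
            hl hθm (hmom y hy) n
      _ = _ := by rw [Finset.sum_const, nsmul_eq_mul]
  calc 1 - t.card * ENNReal.ofReal (exp (-(l * m / 4) * n)) ≤ P Set.univ - P bad := by
        rw [measure_univ]; gcongr
    _ ≤ P (Set.univ \ bad) := le_measure_sdiff
    _ ≤ _ := measure_mono hgood

theorem statement5
    {Ω : Type*} [MeasurableSpace Ω] (P : Measure Ω) [IsProbabilityMeasure P]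
    (μ : Measure ℂ) [IsProbabilityMeasure μ] (hS : IsCompact (msupport μ))
    (hD : AssumptionD μ)
    (X : ℕ → Ω → ℂ) (hmeas : ∀ i, Measurable (X i))
    (hid : ∀ i, Measure.map (X i) P = μ)
    (hindep : iIndepFun X P)
    (m : ℝ) (hm : 0 < m)
    (L : Set ℂ) (hL : IsCompact L) (hLsub : L ⊆ {z : ℂ | m ≤ logPot μ z}) :
    ∃ c₀ > (0 : ℝ), ∃ c > (0 : ℝ), ∀ᶠ n : ℕ in atTop,
      1 - ENNReal.ofReal (Real.exp (-c * n)) ≤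
        P {ω | lemniscate X n ω ∩ L ⊆
          ⋃ k ∈ Finset.range n, Metric.ball (X k ω) (Real.exp (-c₀ * n))} := by
  obtain ⟨l, hl, hmom⟩ :=
    exists_pos_forall_lintegral_exp_neg_mul_log_le hS hD hm hL.isBounded hLsub
  obtain ⟨R, hR, hLR⟩ := hL.isBounded.exists_pos_norm_le
  set θ := min (1 / 2) (m / 4)
  have hθ : 0 < θ := by positivity
  set A := ((4 * R + 2) / θ) ^ 2
  refine ⟨l * m / 32, by positivity, l * m / 8, by positivity, ?_⟩
  have hA : ∀ᶠ n : ℕ in atTop, A ≤ exp (l * m / 16 * n) :=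
    (tendsto_exp_atTop.comp (tendsto_natCast_atTop_atTop.const_mul_atTop
      (by positivity))).eventually_ge_atTop A
  filter_upwards [hA] with n hn
  set δ := exp (-(l * m / 32) * n)
  have hθδ : θ * δ ≤ 1 := by
    have : δ ≤ 1 := exp_le_one_iff.mpr (by rw [neg_mul]; exact neg_nonpos.mpr (by positivity))
    nlinarith [min_le_left (1 / 2 : ℝ) (m / 4)]
  obtain ⟨t, htL, htcard, hnet⟩ :=
    exists_finset_subset_card_le L hR.le hLR (by positivity) hθδ
  refine le_trans ?_ (one_sub_le_measure_lemniscate_inter_subset hmeas hid hindep hl.le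
    (min_le_right _ _) (by linarith [min_le_left (1 / 2 : ℝ) (m / 4)]) (exp_pos _)
    (fun z hz => (hnet z hz).imp fun y hy => ⟨hy.1, hy.2.le⟩) (fun y hy => hmom y (htL hy)) n)
  have hcard : (t.card : ℝ) ≤ exp (l * m / 16 * n) * exp (l * m / 16 * n) := by
    calc (t.card : ℝ) ≤ A / δ ^ 2 := by
          rwa [div_pow, mul_pow, ← div_div, ← div_pow] at htcard
      _ = A * exp (l * m / 16 * n) := by
          rw [div_eq_mul_inv, ← exp_nat_mul, ← exp_neg]; ring_nf
      _ ≤ _ := by gcongr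
  gcongr
  rw [← ENNReal.ofReal_natCast, ← ENNReal.ofReal_mul (Nat.cast_nonneg _)]
  refine ENNReal.ofReal_le_ofReal ((mul_le_mul_of_nonneg_right hcard (exp_pos _).le).trans ?_)
  exact le_of_eq (by rw [← exp_add, ← exp_add]; congr 1; ring)
end

section
/- Let μ be a Borel probability measure on ℂ with compact support S satisfying Assumption (A). If K is either a nonempty compact subset of Ω⁻, or a nonempty compact subset of Ω⁺ with K ∩ S = ∅, then there exists a constant c(K) > 0 such that inf_{z∈K} ∫_S (log|z−w|)² dμ(w) ≥ c(K). -/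
/-!
By Fatou's lemma, `z ↦ ∫ (log|z - w|)² dμ(w)` is lower semicontinuous, so on the compact set `K`
it attains its infimum. That infimum is positive: if the integral vanished at `z`, then
`log|z - w| = 0` for `μ`-a.e. `w`, hence `U_μ(z) = 0`, which is excluded on `Ω⁻` and on `Ω⁺`.
-/

open MeasureTheory ProbabilityTheory Filter Metric

theorem lowerSemicontinuous_lintegral {X α : Type*} [TopologicalSpace X]
    [FirstCountableTopology X] [MeasurableSpace α] {μ : Measure α} {f : X → α → ENNReal}
    (hf : ∀ a, LowerSemicontinuous (f · a)) (hmeas : ∀ x, AEMeasurable (f x) μ) :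
    LowerSemicontinuous fun x => ∫⁻ a, f x a ∂μ :=
  lowerSemicontinuous_iff_le_liminf.2 fun x =>
    (lintegral_mono fun a => (hf a).le_liminf x).trans (lintegral_liminf_le' hmeas)

-- `Real.log 0 = 0` is the least value of this function, so it is lower semicontinuous at `0` too.
theorem lowerSemicontinuous_ofReal_log_sq :
    LowerSemicontinuous fun t : ℝ => ENNReal.ofReal (Real.log t ^ 2) := by
  intro t
  rcases eq_or_ne t 0 with rfl | ht
  · intro y hy
    simp at hy
  · exact (ENNReal.continuous_ofReal.continuousAt.comp
      ((Real.continuousAt_log ht).pow 2)).lowerSemicontinuousAt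

theorem integral_eq_zero_of_lintegral_ofReal_sq_eq_zero {α : Type*} [MeasurableSpace α]
    {μ : Measure α} {f : α → ℝ} (hf : AEMeasurable f μ)
    (h : ∫⁻ a, ENNReal.ofReal (f a ^ 2) ∂μ = 0) : ∫ a, f a ∂μ = 0 := by
  have hsq : ∀ᵐ a ∂μ, ENNReal.ofReal (f a ^ 2) = 0 :=
    (lintegral_eq_zero_iff' (hf.pow_const 2).ennreal_ofReal).1 h
  refine integral_eq_zero_of_ae (hsq.mono fun a ha => ?_)
  rw [ENNReal.ofReal_eq_zero] at ha
  exact pow_eq_zero_iff two_ne_zero |>.1 (le_antisymm ha (sq_nonneg _))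

theorem IsCompact.exists_pos_ofReal_le_of_lowerSemicontinuousOn {X : Type*}
    [TopologicalSpace X] {K : Set X} (hK : IsCompact K) {f : X → ENNReal}
    (hf : LowerSemicontinuousOn f K) (hpos : ∀ x ∈ K, 0 < f x) :
    ∃ c > (0 : ℝ), ∀ x ∈ K, ENNReal.ofReal c ≤ f x := by
  rcases K.eq_empty_or_nonempty with rfl | hne
  · exact ⟨1, one_pos, by simp⟩
  obtain ⟨x₀, hx₀, hmin⟩ := hf.exists_isMinOn hne hK
  obtain ⟨c, -, hc, hcf⟩ := ENNReal.lt_iff_exists_real_btwn.1 (hpos x₀ hx₀)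
  exact ⟨c, ENNReal.ofReal_pos.1 hc, fun x hx => hcf.le.trans (hmin hx)⟩

theorem statement9_general
    (μ : Measure ℂ)
    (K : Set ℂ) (hK : IsCompact K)
    (hcase : K ⊆ {z : ℂ | logPot μ z < 0} ∨
      (K ⊆ {z : ℂ | 0 < logPot μ z} ∧ K ∩ msupport μ = ∅)) :
    ∃ c > (0 : ℝ), ∀ z ∈ K,
      ENNReal.ofReal c ≤
        ∫⁻ w, ENNReal.ofReal ((Real.log ‖z - w‖) ^ 2) ∂μ := by
  have hlsc : LowerSemicontinuous fun z : ℂ =>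
      ∫⁻ w, ENNReal.ofReal ((Real.log ‖z - w‖) ^ 2) ∂μ :=
    lowerSemicontinuous_lintegral
      (fun w => lowerSemicontinuous_ofReal_log_sq.comp (by fun_prop)) (fun z => by fun_prop)
  refine hK.exists_pos_ofReal_le_of_lowerSemicontinuousOn (hlsc.lowerSemicontinuousOn K)
    fun z hz => pos_iff_ne_zero.2 fun hzero => ?_
  have hpot : logPot μ z ≠ 0 := by
    rcases hcase with hneg | ⟨hposi, -⟩
    exacts [(hneg hz).ne, (hposi hz).ne']
  exact hpot (integral_eq_zero_of_lintegral_ofReal_sq_eq_zero (by fun_prop) hzero)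

theorem statement9
    (μ : Measure ℂ) [IsProbabilityMeasure μ] (hS : IsCompact (msupport μ))
    (hA : AssumptionA μ)
    (K : Set ℂ) (hK : IsCompact K) (hKne : K.Nonempty)
    (hcase : K ⊆ {z : ℂ | logPot μ z < 0} ∨
      (K ⊆ {z : ℂ | 0 < logPot μ z} ∧ K ∩ msupport μ = ∅)) :
    ∃ c > (0 : ℝ), ∀ z ∈ K,
      ENNReal.ofReal c ≤
        ∫⁻ w, ENNReal.ofReal ((Real.log ‖z - w‖) ^ 2) ∂μ :=
  statement9_general μ K hK hcase
end

section
/- Let f_n, f : 𝔻 → ℝ be smooth functions on the open unit disk 𝔻 such that the set {z ∈ 𝔻 : f(z) = 0 and ∇f(z) = 0} is empty, and suppose f_n → f uniformly on every compact subset of 𝔻. Then ρ({z ∈ 𝔻 : f_n(z) < 0}) → ρ({z ∈ 𝔻 : f(z) < 0}) as n → ∞. -/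
open MeasureTheory ProbabilityTheory Filter Metric

lemma exists_norm_add (c : ℂ) {s : ℝ} (hs : 0 ≤ s) :
    ∃ w : ℂ, dist w c = s ∧ ‖w‖ = ‖c‖ + s := by
  rcases eq_or_ne c 0 with rfl | hc
  · exact ⟨(s : ℂ), by simp [dist_eq_norm, Complex.norm_real, abs_of_nonneg hs],
      by simp [Complex.norm_real, abs_of_nonneg hs]⟩
  · have hc' : (0:ℝ) < ‖c‖ := norm_pos_iff.mpr hc
    refine ⟨c + ((s / ‖c‖ : ℝ) : ℂ) * c, ?_, ?_⟩
    · rw [dist_eq_norm]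
      have : c + ((s / ‖c‖ : ℝ) : ℂ) * c - c = ((s / ‖c‖ : ℝ) : ℂ) * c := by ring
      rw [this, norm_mul, Complex.norm_real, Real.norm_of_nonneg (by positivity),
        div_mul_cancel₀ _ hc'.ne']
    · have : c + ((s / ‖c‖ : ℝ) : ℂ) * c = ((1 + s / ‖c‖ : ℝ) : ℂ) * c := by
        push_cast; ring
      rw [this, norm_mul, Complex.norm_real, Real.norm_of_nonneg (by positivity), add_mul,
        one_mul, div_mul_cancel₀ _ hc'.ne']

lemma center_bound {c : ℂ} {r R : ℝ} (hr : 0 < r)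
    (h : Metric.ball c r ⊆ Metric.ball (0 : ℂ) R) : ‖c‖ + r ≤ R := by
  by_contra hlt
  push_neg at hlt
  set s := max (r / 2) (R - ‖c‖) with hs
  have hs0 : 0 ≤ s := le_trans (by positivity) (le_max_left _ _)
  have hsr : s < r := max_lt (by linarith) (by linarith)
  obtain ⟨w, hw1, hw2⟩ := exists_norm_add c hs0
  have hw : w ∈ Metric.ball c r := mem_ball.mpr (by rw [hw1]; exact hsr)
  have := h hw
  rw [mem_ball, dist_eq_norm, sub_zero, hw2] at this
  have := le_max_right (r / 2) (R - ‖c‖)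
  linarith

lemma inradius_nonneg (U : Set ℂ) : 0 ≤ inradius U :=
  Real.sSup_nonneg fun r hr => hr.1.le

lemma inradius_bddAbove {U : Set ℂ} (hU : U ⊆ Metric.ball (0 : ℂ) 1) :
    BddAbove {r : ℝ | 0 < r ∧ ∃ c : ℂ, Metric.ball c r ⊆ U} := by
  refine ⟨1, fun r hr => ?_⟩
  obtain ⟨hr0, c, hc⟩ := hr
  have := center_bound hr0 (hc.trans hU)
  have := norm_nonneg c
  linarith

lemma le_inradius {U : Set ℂ} (hU : U ⊆ Metric.ball (0 : ℂ) 1) {r : ℝ} (hr : 0 < r)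
    {c : ℂ} (h : Metric.ball c r ⊆ U) : r ≤ inradius U :=
  le_csSup (inradius_bddAbove hU) ⟨hr, c, h⟩

lemma inradius_le {U : Set ℂ} {r : ℝ} (hr : 0 ≤ r)
    (h : ∀ s, 0 < s → ∀ c : ℂ, Metric.ball c s ⊆ U → s ≤ r) : inradius U ≤ r :=
  Real.sSup_le (fun s hs => h s hs.1 hs.2.choose hs.2.choose_spec) hr
theorem statement11 (f : ℕ → ℂ → ℝ) (g : ℂ → ℝ)
    (hf : ∀ n, ContDiffOn ℝ (⊤ : ℕ∞) (f n) (Metric.ball (0 : ℂ) 1))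
    (hg : ContDiffOn ℝ (⊤ : ℕ∞) g (Metric.ball (0 : ℂ) 1))
    (hcrit : ∀ z ∈ Metric.ball (0 : ℂ) 1, ¬(g z = 0 ∧ fderiv ℝ g z = 0))
    (hconv : ∀ K : Set ℂ, K ⊆ Metric.ball (0 : ℂ) 1 → IsCompact K →
      TendstoUniformlyOn (fun n => f n) g atTop K) :
    Tendsto (fun n : ℕ => inradius {z ∈ Metric.ball (0 : ℂ) 1 | f n z < 0}) atTop
      (nhds (inradius {z ∈ Metric.ball (0 : ℂ) 1 | g z < 0})) := by
  set G : Set ℂ := {z ∈ Metric.ball (0 : ℂ) 1 | g z < 0} with hG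
  set Un : ℕ → Set ℂ := fun n => {z ∈ Metric.ball (0 : ℂ) 1 | f n z < 0} with hUn
  have hGsub : G ⊆ Metric.ball (0 : ℂ) 1 := fun z hz => hz.1
  have hUsub : ∀ n, Un n ⊆ Metric.ball (0 : ℂ) 1 := fun n z hz => hz.1
  set ρ := inradius G with hρ
  have hρ0 : 0 ≤ ρ := inradius_nonneg G
  -- Lower bound
  have lower : ∀ ε : ℝ, 0 < ε → ∀ᶠ n in atTop, ρ - ε ≤ inradius (Un n) := by
    intro ε hε
    rcases le_or_gt ρ ε with h | h
    · exact Eventually.of_forall fun n => le_trans (by linarith) (inradius_nonneg (Un n))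
    · -- ρ > ε > 0; the set defining ρ is nonempty
      have hne : {r : ℝ | 0 < r ∧ ∃ c : ℂ, Metric.ball c r ⊆ G}.Nonempty := by
        by_contra hemp
        rw [Set.not_nonempty_iff_eq_empty] at hemp
        have : ρ = 0 := by rw [hρ, inradius, hemp, Real.sSup_empty]
        linarith
      obtain ⟨r', hr'S, hr'⟩ := exists_lt_of_lt_csSup hne (show ρ - ε < ρ by linarith)
      obtain ⟨hr'0, c, hc⟩ := hr'S
      set t := (ρ - ε + r') / 2 with ht
      have ht0 : 0 < t := by linarith
      have htr : t < r' := by linarith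
      have hKsub : Metric.closedBall c t ⊆ Metric.ball c r' :=
        Metric.closedBall_subset_ball htr
      have hKG : Metric.closedBall c t ⊆ G := hKsub.trans hc
      have hKD : Metric.closedBall c t ⊆ Metric.ball (0 : ℂ) 1 := hKG.trans hGsub
      have hKc : IsCompact (Metric.closedBall c t) := isCompact_closedBall c t
      obtain ⟨x, hxK, hxmax⟩ := hKc.exists_isMaxOn
        (Metric.nonempty_closedBall.mpr ht0.le)
        ((hg.continuousOn).mono hKD)
      have hgx : g x < 0 := (hKG hxK).2
      have hunif := (Metric.tendstoUniformlyOn_iff.mp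
        (hconv _ hKD hKc)) (-g x) (by linarith)
      filter_upwards [hunif] with n hn
      have hball : Metric.ball c t ⊆ Un n := by
        intro z hz
        have hzK : z ∈ Metric.closedBall c t := Metric.ball_subset_closedBall hz
        refine ⟨hKD hzK, ?_⟩
        have h1 := hn z hzK
        have h2 : g z ≤ g x := hxmax hzK
        rw [Real.dist_eq, abs_lt] at h1
        have h3 : g x < g z - f n z := by linarith [h1.1, neg_neg (g x)]
        linarith
      have := le_inradius (hUsub n) ht0 hball
      linarith
  -- Upper bound
  have upper : ∀ ε : ℝ, 0 < ε → ∀ᶠ n in atTop, inradius (Un n) ≤ ρ + ε := by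
    intro ε hε
    set r' := ρ + ε / 2 with hr'
    set r := ρ + ε with hrr
    have hr'0 : 0 < r' := by simp only [hr']; linarith
    have hr0 : 0 < r := by simp only [hrr]; linarith
    -- Key: near every admissible center, g takes a positive value
    have key : ∀ c ∈ Metric.closedBall (0 : ℂ) (1 - r),
        ∃ z ∈ Metric.ball c r', 0 < g z := by
      intro c hcC
      have hcn : ‖c‖ ≤ 1 - r := by
        rw [Metric.mem_closedBall, dist_eq_norm, sub_zero] at hcC; exact hcC
      have hsubD : Metric.ball c r' ⊆ Metric.ball (0 : ℂ) 1 := by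
        intro z hz
        rw [mem_ball] at hz ⊢
        calc dist z 0 ≤ dist z c + dist c 0 := dist_triangle _ _ _
          _ < r' + (1 - r) := by
              rw [dist_zero_right]
              exact add_lt_add_of_lt_of_le hz hcn
          _ ≤ 1 := by simp only [hr', hrr]; linarith
      by_contra hcon
      push_neg at hcon
      have hneg : ∀ z ∈ Metric.ball c r', g z < 0 := by
        intro z hz
        rcases lt_or_eq_of_le (hcon z hz) with h | h
        · exact h
        · exfalso
          have hmax : IsLocalMax g z := by
            filter_upwards [Metric.isOpen_ball.mem_nhds hz] with y hy
            rw [h]; exact hcon y hy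
          exact hcrit z (hsubD hz) ⟨h, hmax.fderiv_eq_zero⟩
      have : r' ≤ ρ :=
        le_inradius hGsub hr'0 (fun z hz => ⟨hsubD hz, hneg z hz⟩)
      simp only [hr'] at this; linarith
    choose! zz hzz hgzz using key
    have hCc : IsCompact (Metric.closedBall (0 : ℂ) (1 - r)) :=
      isCompact_closedBall _ _
    obtain ⟨T, hTC, hcover⟩ := hCc.elim_nhds_subcover
      (fun c => Metric.ball c (ε / 2))
      (fun c _ => Metric.ball_mem_nhds c (by linarith))
    rcases T.eq_empty_or_nonempty with hTe | hTne
    · -- no admissible centers at all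
      refine Eventually.of_forall fun n => ?_
      refine le_trans (inradius_le (by linarith) fun s hs c hc => ?_) (by linarith : r ≤ ρ + ε)
      by_contra hsr
      push_neg at hsr
      have hsub : Metric.ball c r ⊆ Metric.ball (0 : ℂ) 1 :=
        (Metric.ball_subset_ball hsr.le).trans (hc.trans (hUsub n))
      have hcC : c ∈ Metric.closedBall (0 : ℂ) (1 - r) := by
        have := center_bound hr0 hsub
        rw [Metric.mem_closedBall, dist_eq_norm, sub_zero]; linarith
      have := hcover hcC
      simp [hTe] at this
    · -- minimum positive value over the finite witness set
      set δ := T.inf' hTne (fun c => g (zz c)) with hδ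
      have hδ0 : 0 < δ := by
        rw [hδ, Finset.lt_inf'_iff]
        exact fun c hcT => hgzz c (hTC c hcT)
      set K : Set ℂ := ↑(T.image zz) with hK
      have hKfin : K.Finite := (T.image zz).finite_toSet
      have hKD : K ⊆ Metric.ball (0 : ℂ) 1 := by
        intro w hw
        simp only [hK, Finset.coe_image, Set.mem_image, Finset.mem_coe] at hw
        obtain ⟨c, hcT, rfl⟩ := hw
        have hcC := hTC c hcT
        have hcn : ‖c‖ ≤ 1 - r := by
          rw [Metric.mem_closedBall, dist_eq_norm, sub_zero] at hcC; exact hcC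
        have hz := hzz c hcC
        rw [mem_ball] at hz ⊢
        calc dist (zz c) 0 ≤ dist (zz c) c + dist c 0 := dist_triangle _ _ _
          _ < r' + (1 - r) := by
              rw [dist_zero_right]
              exact add_lt_add_of_lt_of_le hz hcn
          _ ≤ 1 := by simp only [hr', hrr]; linarith
      have hunif := (Metric.tendstoUniformlyOn_iff.mp
        (hconv K hKD hKfin.isCompact)) δ hδ0
      filter_upwards [hunif] with n hn
      refine le_trans (inradius_le (by linarith) fun s hs c hc => ?_) (le_refl (ρ + ε))
      by_contra hsr
      push_neg at hsr
      have hrs : r < s := by simp only [hrr]; linarith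
      have hsub : Metric.ball c r ⊆ Metric.ball (0 : ℂ) 1 :=
        (Metric.ball_subset_ball hrs.le).trans (hc.trans (hUsub n))
      have hcC : c ∈ Metric.closedBall (0 : ℂ) (1 - r) := by
        have := center_bound hr0 hsub
        rw [Metric.mem_closedBall, dist_eq_norm, sub_zero]; linarith
      obtain ⟨i, hiT, hci⟩ := Set.mem_iUnion₂.mp (hcover hcC)
      have hiC := hTC i hiT
      -- zz i lies in ball c s
      have hzi : zz i ∈ Metric.ball c s := by
        rw [mem_ball]
        have h1 := mem_ball.mp (hzz i hiC)
        have h2 := mem_ball.mp hci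
        calc dist (zz i) c ≤ dist (zz i) i + dist i c := dist_triangle _ _ _
          _ < r' + ε / 2 := add_lt_add h1 (by rw [dist_comm]; exact h2)
          _ = r := by simp only [hr', hrr]; ring
          _ < s := hrs
      have hfn : f n (zz i) < 0 := (hc hzi).2
      have hmem : zz i ∈ K := by
        simp only [hK, Finset.coe_image, Set.mem_image, Finset.mem_coe]
        exact ⟨i, hiT, rfl⟩
      have hd := hn (zz i) hmem
      rw [Real.dist_eq, abs_lt] at hd
      have hgi := hgzz i hiC
      have hδle : δ ≤ g (zz i) := by
        rw [hδ]; exact Finset.inf'_le _ hiT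
      linarith
  -- combine
  rw [Metric.tendsto_atTop]
  intro ε hε
  have := ((upper (ε / 2) (by linarith)).and (lower (ε / 2) (by linarith)))
  rw [eventually_atTop] at this
  obtain ⟨N, hN⟩ := this
  refine ⟨N, fun n hn => ?_⟩
  obtain ⟨h1, h2⟩ := hN n hn
  rw [Real.dist_eq, abs_lt]
  constructor <;> linarith
end
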